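/- Let R be a commutative k-algebra with a separable Frobenius structure (ψ, (eᵢ, fᵢ)), and let A and B be associative unital R-algebras (hence k-algebras by restriction). Let Φ : A ⊗[R] B → B ⊗[R] A be an R-linear distributive law: Φ ∘ (μ_A ⊗ id_B) = (id_B ⊗ μ_A) ∘ (Φ ⊗ id_A) ∘ (id_A ⊗ Φ) over R, Φ ∘ (id_A ⊗ μ_B) = (μ_B ⊗ id_A) ∘ (id_B ⊗ Φ) ∘ (Φ ⊗ id_B) over R, Φ(1_A ⊗ b) = b ⊗ 1_A and Φ(a ⊗ 1_B) = 1_B ⊗ a for all a ∈ A, b ∈ B. Write π_{M,N} : M ⊗[k] N → M ⊗[R] N for the canonical projection and ι_{M,N} : M ⊗[R] N → M ⊗[k] N for the k-linear section determined by ι_{M,N}(m ⊗ n) = Σᵢ (eᵢ • m) ⊗ (fᵢ • n). Then Ψ := ι_{B,A} ∘ Φ ∘ π_{A,B} : A ⊗[k] B → B ⊗[k] A is a weak distributive law of A over B over k, and its associated idempotent satisfies Ψ̄ = ι_{B,A} ∘ π_{B,A}. Hence the weak wreath product of Ψ is isomorphic as a k-algebra to B ⊗[R] A with the multiplication induced by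 Φ. -/

import Mathlib

/-! Since `∑ i, e i * f i = 1`, the map `ι : M ⊗[R] N → M ⊗[k] N`, `m ⊗ x ↦ ∑ i, e i • m ⊗ f i • x`,
is a section of the projection `π`. Moreover, moving the `e i` and `f i` across the tensor sign,
`ι` intertwines right multiplication on `A` and left multiplication on `B` over `R` with the
corresponding maps over `k`. Hence the composites of `Ψ = ι ∘ Φ ∘ π` occurring in the axioms of a
weak distributive law, evaluated on the image of `ι`, are the images under `ι` of the composites
of `Φ`, so the axioms of `Φ` transfer to `Ψ`; the unit axioms of `Φ` give the weak unit axiom and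
`Ψ̄ = ι ∘ π` directly, and `π ∘ ι = id` identifies the multiplications. -/

open TensorProduct LinearMap

noncomputable section

section WeakDistrLaw

variable (k : Type*) [CommRing k]
variable (A B : Type*) [Ring A] [Algebra k A] [Ring B] [Algebra k B]

/-- The composite `(id_B ⊗ μ_A) ∘ (Ψ ⊗ id_A)` (with associators inserted),
as a map `A ⊗ (B ⊗ A) → B ⊗ A`. -/
def wComp1 (Ψ : A ⊗[k] B →ₗ[k] B ⊗[k] A) :
    A ⊗[k] (B ⊗[k] A) →ₗ[k] B ⊗[k] A :=
  lTensor B (mul' k A) ∘ₗ (TensorProduct.assoc k B A A).toLinearMap ∘ₗ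
    rTensor A Ψ ∘ₗ (TensorProduct.assoc k A B A).symm.toLinearMap

/-- The composite `(μ_B ⊗ id_A) ∘ (id_B ⊗ Ψ)` (with associators inserted),
as a map `(B ⊗ A) ⊗ B → B ⊗ A`. -/
def wComp2 (Ψ : A ⊗[k] B →ₗ[k] B ⊗[k] A) :
    (B ⊗[k] A) ⊗[k] B →ₗ[k] B ⊗[k] A :=
  rTensor A (mul' k B) ∘ₗ (TensorProduct.assoc k B B A).symm.toLinearMap ∘ₗ
    lTensor B Ψ ∘ₗ (TensorProduct.assoc k B A B).toLinearMap

/-- Ψ is a weak distributive law of A over B. -/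
def IsWeakDistrLaw (Ψ : A ⊗[k] B →ₗ[k] B ⊗[k] A) : Prop :=
  (∀ (a a' : A) (b : B),
      Ψ ((a * a') ⊗ₜ[k] b) = wComp1 k A B Ψ (a ⊗ₜ[k] Ψ (a' ⊗ₜ[k] b))) ∧
  (∀ (a : A) (b b' : B),
      Ψ (a ⊗ₜ[k] (b * b')) = wComp2 k A B Ψ (Ψ (a ⊗ₜ[k] b) ⊗ₜ[k] b')) ∧
  (∀ (a : A) (b : B),
      rTensor A (mulLeft k b) (Ψ (a ⊗ₜ[k] (1 : B))) =
        lTensor B (mulRight k a) (Ψ ((1 : A) ⊗ₜ[k] b)))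

/-- The multiplication `μ = (μ_B ⊗ μ_A) ∘ (id_B ⊗ Ψ ⊗ id_A)` on `B ⊗ A`. -/
def wMu (Ψ : A ⊗[k] B →ₗ[k] B ⊗[k] A) :
    (B ⊗[k] A) ⊗[k] (B ⊗[k] A) →ₗ[k] B ⊗[k] A :=
  rTensor A (mul' k B) ∘ₗ (TensorProduct.assoc k B B A).symm.toLinearMap ∘ₗ
    lTensor B (wComp1 k A B Ψ) ∘ₗ (TensorProduct.assoc k B A (B ⊗[k] A)).toLinearMap

/-- The canonical idempotent `Ψ̄ : B ⊗ A → B ⊗ A`, `b ⊗ a ↦ μ((b ⊗ 1) ⊗ (1 ⊗ a))`. -/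
def wPsiBar (Ψ : A ⊗[k] B →ₗ[k] B ⊗[k] A) : B ⊗[k] A →ₗ[k] B ⊗[k] A :=
  wMu k A B Ψ ∘ₗ
    TensorProduct.map ((TensorProduct.mk k B A).flip (1 : A)) (TensorProduct.mk k B A (1 : B))

end WeakDistrLaw

section Proj

variable (k : Type*) [CommRing k] (R : Type*) [CommRing R] [Algebra k R]
variable (M N : Type*) [AddCommGroup M] [Module k M] [Module R M] [IsScalarTower k R M]
  [AddCommGroup N] [Module k N] [Module R N] [IsScalarTower k R N]

/-- The canonical projection `π : M ⊗[k] N → M ⊗[R] N`, `m ⊗[k] n ↦ m ⊗[R] n`. -/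
def canProj : M ⊗[k] N →ₗ[k] M ⊗[R] N :=
  TensorProduct.lift
    (LinearMap.mk₂ k (fun m n => m ⊗ₜ[R] n)
      (fun m₁ m₂ n => TensorProduct.add_tmul m₁ m₂ n)
      (fun c m n => (TensorProduct.smul_tmul' c m n).symm)
      (fun m n₁ n₂ => TensorProduct.tmul_add m n₁ n₂)
      (fun c m n => by
        show m ⊗ₜ[R] (c • n) = c • (m ⊗ₜ[R] n)
        rw [← IsScalarTower.algebraMap_smul R c n, ← TensorProduct.smul_tmul,
          IsScalarTower.algebraMap_smul, TensorProduct.smul_tmul']))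

end Proj

theorem canProj_tmul {k R M N : Type*} [CommRing k] [CommRing R] [Algebra k R]
    [AddCommGroup M] [Module k M] [Module R M] [IsScalarTower k R M]
    [AddCommGroup N] [Module k N] [Module R N] [IsScalarTower k R N] (m : M) (n : N) :
    canProj k R M N (m ⊗ₜ[k] n) = m ⊗ₜ[R] n :=
  rfl

section Unfolding

variable {k : Type*} [CommRing k]

theorem lTensor_mul'_assoc_tmul {M A : Type*} [AddCommGroup M] [Module k M] [Ring A]
    [Algebra k A] (z : M ⊗[k] A) (a : A) :
    lTensor M (mul' k A) (TensorProduct.assoc k M A A (z ⊗ₜ[k] a)) =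
      lTensor M (mulRight k a) z := by
  induction z using TensorProduct.induction_on with
  | zero => simp
  | tmul m a' => simp
  | add x y hx hy => simp only [add_tmul, map_add, hx, hy]

theorem rTensor_mul'_assoc_symm_tmul {B N : Type*} [Ring B] [Algebra k B] [AddCommGroup N]
    [Module k N] (b : B) (z : B ⊗[k] N) :
    rTensor N (mul' k B) ((TensorProduct.assoc k B B N).symm (b ⊗ₜ[k] z)) =
      rTensor N (mulLeft k b) z := by
  induction z using TensorProduct.induction_on with
  | zero => simp
  | tmul b' m => simp
  | add x y hx hy => simp only [tmul_add, map_add, hx, hy]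

variable {A B : Type*} [Ring A] [Algebra k A] [Ring B] [Algebra k B]

theorem wComp1_tmul (Ψ : A ⊗[k] B →ₗ[k] B ⊗[k] A) (a : A) (b : B) (a' : A) :
    wComp1 k A B Ψ (a ⊗ₜ[k] (b ⊗ₜ[k] a')) = lTensor B (mulRight k a') (Ψ (a ⊗ₜ[k] b)) := by
  simpa [wComp1] using lTensor_mul'_assoc_tmul (Ψ (a ⊗ₜ[k] b)) a'

theorem wComp2_tmul (Ψ : A ⊗[k] B →ₗ[k] B ⊗[k] A) (b : B) (a : A) (b' : B) :
    wComp2 k A B Ψ ((b ⊗ₜ[k] a) ⊗ₜ[k] b') = rTensor A (mulLeft k b) (Ψ (a ⊗ₜ[k] b')) := by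
  simpa [wComp2] using rTensor_mul'_assoc_symm_tmul b (Ψ (a ⊗ₜ[k] b'))

theorem wMu_tmul (Ψ : A ⊗[k] B →ₗ[k] B ⊗[k] A) (b : B) (a : A) (z : B ⊗[k] A) :
    wMu k A B Ψ ((b ⊗ₜ[k] a) ⊗ₜ[k] z) = rTensor A (mulLeft k b) (wComp1 k A B Ψ (a ⊗ₜ[k] z)) := by
  simpa [wMu] using rTensor_mul'_assoc_symm_tmul b (wComp1 k A B Ψ (a ⊗ₜ[k] z))

end Unfolding

section SeparableSection

variable {k R : Type*} [CommRing k] [CommRing R] [Algebra k R] {n : ℕ}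

/-- `ι_{M,N}` of the paper, a section of `canProj k R M N` when `∑ i, e i * f i = 1`. -/
def IsSeparableSection (e f : Fin n → R) {M N : Type*} [AddCommGroup M] [Module k M]
    [Module R M] [IsScalarTower k R M] [AddCommGroup N] [Module k N] [Module R N]
    [IsScalarTower k R N] (ι : M ⊗[R] N →ₗ[k] M ⊗[k] N) : Prop :=
  ∀ (m : M) (x : N), ι (m ⊗ₜ[R] x) = ∑ i, (e i • m) ⊗ₜ[k] (f i • x)

namespace IsSeparableSection

variable {e f : Fin n → R}
variable {M N : Type*} [AddCommGroup M] [Module k M] [Module R M] [IsScalarTower k R M]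
  [AddCommGroup N] [Module k N] [Module R N] [IsScalarTower k R N]

theorem canProj_apply {ι : M ⊗[R] N →ₗ[k] M ⊗[k] N} (hι : IsSeparableSection e f ι)
    (hsep : ∑ i, e i * f i = 1) (x : M ⊗[R] N) : canProj k R M N (ι x) = x := by
  induction x using TensorProduct.induction_on with
  | zero => simp
  | tmul m x =>
    rw [hι, map_sum]
    simp only [canProj_tmul]
    simp only [← smul_tmul', tmul_smul, smul_smul, ← Finset.sum_smul,
      mul_comm (f _), hsep, one_smul]
  | add x y hx hy => rw [map_add, map_add, hx, hy]

variable {A B : Type*} [Ring A] [Algebra R A] [Algebra k A] [IsScalarTower k R A]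
  [Ring B] [Algebra R B] [Algebra k B] [IsScalarTower k R B]

theorem sum_lTensor_mulRight_smul {ι : M ⊗[R] A →ₗ[k] M ⊗[k] A} (hι : IsSeparableSection e f ι)
    (hsep : ∑ i, e i * f i = 1) (y : M ⊗[R] A) (a : A) :
    ∑ i, lTensor M (mulRight k (f i • a)) (ι (e i • y)) = ι (lTensor M (mulRight R a) y) := by
  induction y using TensorProduct.induction_on with
  | zero => simp
  | tmul m a' =>
    calc ∑ i, lTensor M (mulRight k (f i • a)) (ι (e i • m ⊗ₜ[R] a'))
        = ∑ i, ∑ j, (e j • m) ⊗ₜ[k] ((f j * (e i * f i)) • (a' * a)) := by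
          simp only [← tmul_smul, hι _ _, map_sum, lTensor_tmul, mulRight_apply, smul_smul,
            smul_mul_smul_comm, mul_assoc]
      _ = ∑ j, (e j • m) ⊗ₜ[k] (f j • (a' * a)) := by
          simp only [Finset.sum_comm (γ := Fin n), ← tmul_sum, ← Finset.sum_smul,
            ← Finset.mul_sum, hsep, mul_one]
      _ = ι (lTensor M (mulRight R a) (m ⊗ₜ[R] a')) := by
          rw [lTensor_tmul, mulRight_apply, hι]
  | add x y hx hy => simp only [smul_add, map_add, Finset.sum_add_distrib, hx, hy]

theorem sum_rTensor_mulLeft_smul {ι : B ⊗[R] N →ₗ[k] B ⊗[k] N} (hι : IsSeparableSection e f ι)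
    (hsep : ∑ i, e i * f i = 1) (y : B ⊗[R] N) (b : B) :
    ∑ i, rTensor N (mulLeft k (e i • b)) (ι (f i • y)) = ι (rTensor N (mulLeft R b) y) := by
  induction y using TensorProduct.induction_on with
  | zero => simp
  | tmul b' x =>
    calc ∑ i, rTensor N (mulLeft k (e i • b)) (ι (f i • b' ⊗ₜ[R] x))
        = ∑ i, ∑ j, ((e j * (e i * f i)) • (b * b')) ⊗ₜ[k] (f j • x) := by
          simp only [smul_tmul', hι _ _, map_sum, rTensor_tmul, mulLeft_apply, smul_smul,
            smul_mul_smul_comm]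
          exact Finset.sum_congr rfl fun i _ => Finset.sum_congr rfl fun j _ => by
            rw [mul_left_comm]
      _ = ∑ j, (e j • (b * b')) ⊗ₜ[k] (f j • x) := by
          simp only [Finset.sum_comm (γ := Fin n), ← sum_tmul, ← Finset.sum_smul,
            ← Finset.mul_sum, hsep, mul_one]
      _ = ι (rTensor N (mulLeft R b) (b' ⊗ₜ[R] x)) := by
          rw [rTensor_tmul, mulLeft_apply, hι]
  | add x y hx hy => simp only [smul_add, map_add, Finset.sum_add_distrib, hx, hy]

variable {ι : B ⊗[R] A →ₗ[k] B ⊗[k] A}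

theorem wComp1_tmul_apply (hι : IsSeparableSection e f ι) (hsep : ∑ i, e i * f i = 1)
    (Φ : A ⊗[R] B →ₗ[R] B ⊗[R] A) (a : A) (x : B ⊗[R] A) :
    wComp1 k A B (ι ∘ₗ Φ.restrictScalars k ∘ₗ canProj k R A B) (a ⊗ₜ[k] ι x) =
      ι (wComp1 R A B Φ (a ⊗ₜ[R] x)) := by
  induction x using TensorProduct.induction_on with
  | zero => simp
  | tmul b a' =>
    have summand (i : Fin n) :
        wComp1 k A B (ι ∘ₗ Φ.restrictScalars k ∘ₗ canProj k R A B)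
            (a ⊗ₜ[k] ((e i • b) ⊗ₜ[k] (f i • a'))) =
          lTensor B (mulRight k (f i • a')) (ι (e i • Φ (a ⊗ₜ[R] b))) := by
      rw [wComp1_tmul, coe_comp, coe_comp, Function.comp_apply, Function.comp_apply,
        canProj_tmul, coe_restrictScalars, tmul_smul, map_smul]
    rw [hι, tmul_sum, map_sum, Finset.sum_congr rfl fun i _ => summand i,
      hι.sum_lTensor_mulRight_smul hsep, wComp1_tmul]
  | add x y hx hy => simp only [map_add, tmul_add, hx, hy]

theorem wComp2_apply_tmul (hι : IsSeparableSection e f ι) (hsep : ∑ i, e i * f i = 1)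
    (Φ : A ⊗[R] B →ₗ[R] B ⊗[R] A) (x : B ⊗[R] A) (b : B) :
    wComp2 k A B (ι ∘ₗ Φ.restrictScalars k ∘ₗ canProj k R A B) (ι x ⊗ₜ[k] b) =
      ι (wComp2 R A B Φ (x ⊗ₜ[R] b)) := by
  induction x using TensorProduct.induction_on with
  | zero => simp
  | tmul b' a =>
    have summand (i : Fin n) :
        wComp2 k A B (ι ∘ₗ Φ.restrictScalars k ∘ₗ canProj k R A B)
            (((e i • b') ⊗ₜ[k] (f i • a)) ⊗ₜ[k] b) =
          rTensor A (mulLeft k (e i • b')) (ι (f i • Φ (a ⊗ₜ[R] b))) := by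
      rw [wComp2_tmul, coe_comp, coe_comp, Function.comp_apply, Function.comp_apply,
        canProj_tmul, coe_restrictScalars, ← smul_tmul', map_smul]
    rw [hι, sum_tmul, map_sum, Finset.sum_congr rfl fun i _ => summand i,
      hι.sum_rTensor_mulLeft_smul hsep, wComp2_tmul]
  | add x y hx hy => simp only [map_add, add_tmul, hx, hy]

theorem isWeakDistrLaw (hι : IsSeparableSection e f ι) (hsep : ∑ i, e i * f i = 1)
    {Φ : A ⊗[R] B →ₗ[R] B ⊗[R] A}
    (hΦ₁ : ∀ (a a' : A) (b : B),
      Φ ((a * a') ⊗ₜ[R] b) = wComp1 R A B Φ (a ⊗ₜ[R] Φ (a' ⊗ₜ[R] b)))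
    (hΦ₂ : ∀ (a : A) (b b' : B),
      Φ (a ⊗ₜ[R] (b * b')) = wComp2 R A B Φ (Φ (a ⊗ₜ[R] b) ⊗ₜ[R] b'))
    (hΦu₁ : ∀ b : B, Φ ((1 : A) ⊗ₜ[R] b) = b ⊗ₜ[R] (1 : A))
    (hΦu₂ : ∀ a : A, Φ (a ⊗ₜ[R] (1 : B)) = (1 : B) ⊗ₜ[R] a) :
    IsWeakDistrLaw k A B (ι ∘ₗ Φ.restrictScalars k ∘ₗ canProj k R A B) := by
  refine ⟨fun a a' b => ?_, fun a b b' => ?_, fun a b => ?_⟩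
  · exact (congrArg ι (hΦ₁ a a' b)).trans (hι.wComp1_tmul_apply hsep Φ a _).symm
  · exact (congrArg ι (hΦ₂ a b b')).trans (hι.wComp2_apply_tmul hsep Φ _ b').symm
  · change rTensor A (mulLeft k b) (ι (Φ (a ⊗ₜ[R] 1))) =
      lTensor B (mulRight k a) (ι (Φ (1 ⊗ₜ[R] b)))
    simp only [hΦu₁, hΦu₂, hι _ _, map_sum, rTensor_tmul, lTensor_tmul, mulLeft_apply,
      mulRight_apply, mul_smul_comm, smul_mul_assoc, mul_one, one_mul]

theorem wPsiBar_eq {Φ : A ⊗[R] B →ₗ[R] B ⊗[R] A} (hι : IsSeparableSection e f ι)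
    (hΦu₂ : ∀ a : A, Φ (a ⊗ₜ[R] (1 : B)) = (1 : B) ⊗ₜ[R] a) :
    wPsiBar k A B (ι ∘ₗ Φ.restrictScalars k ∘ₗ canProj k R A B) = ι ∘ₗ canProj k R B A := by
  refine TensorProduct.ext' fun b a => ?_
  change wMu k A B _ ((b ⊗ₜ[k] (1 : A)) ⊗ₜ[k] ((1 : B) ⊗ₜ[k] a)) = ι (b ⊗ₜ[R] a)
  rw [wMu_tmul, wComp1_tmul]
  change rTensor A (mulLeft k b) (lTensor B (mulRight k a) (ι (Φ (1 ⊗ₜ[R] 1)))) = _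
  simp only [hΦu₂, hι _ _, map_sum, rTensor_tmul, lTensor_tmul, mulLeft_apply,
    mulRight_apply, mul_smul_comm, smul_mul_assoc, mul_one, one_mul]

theorem canProj_wMu (hι : IsSeparableSection e f ι) (hsep : ∑ i, e i * f i = 1)
    (Φ : A ⊗[R] B →ₗ[R] B ⊗[R] A) (x y : B ⊗[R] A) :
    canProj k R B A (wMu k A B (ι ∘ₗ Φ.restrictScalars k ∘ₗ canProj k R A B) (ι x ⊗ₜ[k] ι y)) =
      wMu R A B Φ (x ⊗ₜ[R] y) := by
  induction x using TensorProduct.induction_on with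
  | zero => simp
  | tmul b a =>
    have summand (i : Fin n) :
        wMu k A B (ι ∘ₗ Φ.restrictScalars k ∘ₗ canProj k R A B)
            (((e i • b) ⊗ₜ[k] (f i • a)) ⊗ₜ[k] ι y) =
          rTensor A (mulLeft k (e i • b)) (ι (f i • wComp1 R A B Φ (a ⊗ₜ[R] y))) := by
      rw [wMu_tmul, hι.wComp1_tmul_apply hsep, ← smul_tmul', map_smul]
    rw [hι, sum_tmul, map_sum, Finset.sum_congr rfl fun i _ => summand i,
      hι.sum_rTensor_mulLeft_smul hsep, hι.canProj_apply hsep, wMu_tmul]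
  | add u v hu hv => simp only [map_add, add_tmul, hu, hv]

end IsSeparableSection

end SeparableSection

theorem frobenius_distrLaw_to_weakDistrLaw_general
    (k : Type*) [CommRing k] (R : Type*) [CommRing R] [Algebra k R]
    (n : ℕ) (e f : Fin n → R)
    (hsep : ∑ i, e i * f i = 1)
    (A B : Type*) [Ring A] [Algebra R A] [Algebra k A] [IsScalarTower k R A]
    [Ring B] [Algebra R B] [Algebra k B] [IsScalarTower k R B]
    (Φ : A ⊗[R] B →ₗ[R] B ⊗[R] A)
    (hΦ₁ : ∀ (a a' : A) (b : B),
      Φ ((a * a') ⊗ₜ[R] b) = wComp1 R A B Φ (a ⊗ₜ[R] Φ (a' ⊗ₜ[R] b)))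
    (hΦ₂ : ∀ (a : A) (b b' : B),
      Φ (a ⊗ₜ[R] (b * b')) = wComp2 R A B Φ (Φ (a ⊗ₜ[R] b) ⊗ₜ[R] b'))
    (hΦu₁ : ∀ b : B, Φ ((1 : A) ⊗ₜ[R] b) = b ⊗ₜ[R] (1 : A))
    (hΦu₂ : ∀ a : A, Φ (a ⊗ₜ[R] (1 : B)) = (1 : B) ⊗ₜ[R] a)
    (ιBA : B ⊗[R] A →ₗ[k] B ⊗[k] A)
    (hι : ∀ (b : B) (a : A), ιBA (b ⊗ₜ[R] a) = ∑ i, (e i • b) ⊗ₜ[k] (f i • a)) :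
    IsWeakDistrLaw k A B (ιBA ∘ₗ Φ.restrictScalars k ∘ₗ canProj k R A B) ∧
    wPsiBar k A B (ιBA ∘ₗ Φ.restrictScalars k ∘ₗ canProj k R A B) =
      ιBA ∘ₗ canProj k R B A ∧
    (∀ x y : B ⊗[R] A,
      canProj k R B A
          (wMu k A B (ιBA ∘ₗ Φ.restrictScalars k ∘ₗ canProj k R A B)
            (ιBA x ⊗ₜ[k] ιBA y)) =
        wMu R A B Φ (x ⊗ₜ[R] y)) := by
  have hι : IsSeparableSection e f ιBA := hι
  exact ⟨hι.isWeakDistrLaw hsep hΦ₁ hΦ₂ hΦu₁ hΦu₂, hι.wPsiBar_eq hΦu₂, hι.canProj_wMu hsep Φ⟩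

/-- Let `R` be a commutative `k`-algebra with a separable Frobenius structure and
`Φ : A ⊗[R] B → B ⊗[R] A` an `R`-linear distributive law between `R`-algebras `A`, `B`.
Then `Ψ := ι_{B,A} ∘ Φ ∘ π_{A,B}` is a weak distributive law of `A` over `B` over `k`,
its associated idempotent is `Ψ̄ = ι_{B,A} ∘ π_{B,A}`, and the weak wreath product of
`Ψ` is (isomorphic to) `B ⊗[R] A` with the multiplication induced by `Φ`. -/
theorem frobenius_distrLaw_to_weakDistrLaw
    (k : Type*) [CommRing k] (R : Type*) [CommRing R] [Algebra k R]
    (n : ℕ) (e f : Fin n → R) (ψ : R →ₗ[k] k)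
    (hfrob₁ : ∀ r : R, ∑ i, ψ (r * e i) • f i = r)
    (hfrob₂ : ∀ r : R, ∑ i, ψ (f i * r) • e i = r)
    (hsep : ∑ i, e i * f i = 1)
    (A B : Type*) [Ring A] [Algebra R A] [Algebra k A] [IsScalarTower k R A]
    [Ring B] [Algebra R B] [Algebra k B] [IsScalarTower k R B]
    (Φ : A ⊗[R] B →ₗ[R] B ⊗[R] A)
    (hΦ₁ : ∀ (a a' : A) (b : B),
      Φ ((a * a') ⊗ₜ[R] b) = wComp1 R A B Φ (a ⊗ₜ[R] Φ (a' ⊗ₜ[R] b)))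
    (hΦ₂ : ∀ (a : A) (b b' : B),
      Φ (a ⊗ₜ[R] (b * b')) = wComp2 R A B Φ (Φ (a ⊗ₜ[R] b) ⊗ₜ[R] b'))
    (hΦu₁ : ∀ b : B, Φ ((1 : A) ⊗ₜ[R] b) = b ⊗ₜ[R] (1 : A))
    (hΦu₂ : ∀ a : A, Φ (a ⊗ₜ[R] (1 : B)) = (1 : B) ⊗ₜ[R] a)
    (ιBA : B ⊗[R] A →ₗ[k] B ⊗[k] A)
    (hι : ∀ (b : B) (a : A), ιBA (b ⊗ₜ[R] a) = ∑ i, (e i • b) ⊗ₜ[k] (f i • a)) :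
    IsWeakDistrLaw k A B (ιBA ∘ₗ Φ.restrictScalars k ∘ₗ canProj k R A B) ∧
    wPsiBar k A B (ιBA ∘ₗ Φ.restrictScalars k ∘ₗ canProj k R A B) =
      ιBA ∘ₗ canProj k R B A ∧
    (∀ x y : B ⊗[R] A,
      canProj k R B A
          (wMu k A B (ιBA ∘ₗ Φ.restrictScalars k ∘ₗ canProj k R A B)
            (ιBA x ⊗ₜ[k] ιBA y)) =
        wMu R A B Φ (x ⊗ₜ[R] y)) :=
  frobenius_distrLaw_to_weakDistrLaw_general k R n e f hsep A B Φ hΦ₁ hΦ₂ hΦu₁ hΦu₂ ιBA hι
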